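/- arXiv:1901.05946 — 4 statements merged into one kernel-verified Lean document; each statement's English description precedes it below -/
import Mathlib

section
/- Suppose there exist real thresholds θ1 < θ2 such that conf(p) ≤ θ1 for every pixel p with J(p) = true, and conf(p) ≥ θ2 for every pixel p with J(p) = false. Suppose moreover that there exists a pixel p ∈ FN₀ with J(p) = true. Then for every θ with θ1 < θ ≤ θ2, IoU < UIoU(θ). -/
open Finset

section
variable {P : Type*} [Fintype P] {C : ℕ}
variable (c : Fin C) (H : P → Fin C) (J : P → Bool) (pred : P → Fin C) (conf : P → ℝ)

/-- True positives at threshold θ. -/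
noncomputable def TP (θ : ℝ) : Finset P := univ.filter (fun p => H p = c ∧ θ ≤ conf p ∧ pred p = c)
/-- False positives at threshold θ. -/
noncomputable def FP (θ : ℝ) : Finset P := univ.filter (fun p => H p ≠ c ∧ θ ≤ conf p ∧ pred p = c)
/-- False negatives at threshold θ. -/
noncomputable def FN (θ : ℝ) : Finset P := univ.filter (fun p => H p = c ∧ θ ≤ conf p ∧ pred p ≠ c)
/-- True invalids at threshold θ. -/
noncomputable def TI (θ : ℝ) : Finset P := univ.filter (fun p => H p = c ∧ conf p < θ ∧ J p = true)
/-- False invalids at threshold θ. -/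
noncomputable def FI (θ : ℝ) : Finset P := univ.filter (fun p => H p = c ∧ conf p < θ ∧ J p = false)
/-- True positives with no invalidation. -/
def TP₀ : Finset P := univ.filter (fun p => H p = c ∧ pred p = c)
/-- False positives with no invalidation. -/
def FP₀ : Finset P := univ.filter (fun p => H p ≠ c ∧ pred p = c)
/-- False negatives with no invalidation. -/
def FN₀ : Finset P := univ.filter (fun p => H p = c ∧ pred p ≠ c)

/-- Uncertainty-aware IoU at threshold θ. -/
noncomputable def UIoU (θ : ℝ) : ℝ :=
  ((TP c H pred conf θ).card + (TI c H J conf θ).card) /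
    ((TP c H pred conf θ).card + (TI c H J conf θ).card + (FP c H pred conf θ).card +
      (FN c H pred conf θ).card + (FI c H J conf θ).card)

/-- Standard IoU. -/
noncomputable def IoU : ℝ :=
  (TP₀ c H pred).card / ((TP₀ c H pred).card + (FP₀ c H pred).card + (FN₀ c H pred).card)

end

/-- If invalid pixels have confidence ≤ θ1 and valid pixels have confidence ≥ θ2 with θ1 < θ2,
and there is a false-negative pixel (at threshold 0, i.e. with no invalidation) that is invalid,
then for every θ with θ1 < θ ≤ θ2 the uncertainty-aware IoU strictly exceeds the standard IoU. -/
theorem iou_lt_uiou_of_false_negative_invalid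
    {P : Type*} [Fintype P] {C : ℕ} (c : Fin C)
    (H : P → Fin C) (J : P → Bool) (pred : P → Fin C) (conf : P → ℝ)
    (θ1 θ2 : ℝ) (h12 : θ1 < θ2)
    (hinv : ∀ p, J p = true → conf p ≤ θ1)
    (hval : ∀ p, J p = false → θ2 ≤ conf p)
    (hex : ∃ p ∈ FN₀ c H pred, J p = true) :
    ∀ θ : ℝ, θ1 < θ → θ ≤ θ2 → IoU c H pred < UIoU c H J pred conf θ := by
  intro θ hθ1 hθ2
  classical
  have key : ∀ p : P, conf p < θ ↔ J p = true := by
    intro p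
    constructor
    · intro h
      by_contra hj
      have hj' : J p = false := by
        cases hJ : J p
        · rfl
        · exact absurd hJ hj
      have := hval p hj'
      linarith
    · intro h
      exact lt_of_le_of_lt (hinv p h) hθ1
  have key' : ∀ p : P, θ ≤ conf p ↔ J p = false := by
    intro p
    rw [← not_lt, key]
    cases J p <;> simp
  -- rewrite each thresholded set as a J-based filter
  have hTP : TP c H pred conf θ =
      univ.filter (fun p => (H p = c ∧ pred p = c) ∧ J p = false) := by
    ext p; simp only [TP, mem_filter, mem_univ, true_and, key' p]; tauto
  have hFP : FP c H pred conf θ =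
      univ.filter (fun p => (H p ≠ c ∧ pred p = c) ∧ J p = false) := by
    ext p; simp only [FP, mem_filter, mem_univ, true_and, key' p]; tauto
  have hFN : FN c H pred conf θ =
      univ.filter (fun p => (H p = c ∧ pred p ≠ c) ∧ J p = false) := by
    ext p; simp only [FN, mem_filter, mem_univ, true_and, key' p]; tauto
  have hTIsplit : TI c H J conf θ =
      univ.filter (fun p => (H p = c ∧ pred p = c) ∧ J p = true) ∪
      univ.filter (fun p => (H p = c ∧ pred p ≠ c) ∧ J p = true) := by
    ext p
    simp only [TI, mem_filter, mem_univ, true_and, key p, mem_union]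
    tauto
  have hFI : FI c H J conf θ = ∅ := by
    ext p
    simp only [FI, mem_filter, mem_univ, true_and, key p, notMem_empty, iff_false]
    rintro ⟨-, h1, h2⟩; rw [h1] at h2; exact Bool.noConfusion h2
  -- splitting lemma
  have split : ∀ (q : P → Prop) [DecidablePred q],
      (univ.filter q).card = (univ.filter (fun p => q p ∧ J p = false)).card +
        (univ.filter (fun p => q p ∧ J p = true)).card := by
    intro q _
    rw [← card_union_of_disjoint]
    · congr 1
      ext p
      simp only [mem_union, mem_filter, mem_univ, true_and]
      cases hJ : J p <;> tauto
    · rw [Finset.disjoint_left]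
      intro p hp hp'
      simp only [mem_filter] at hp hp'
      rw [hp.2.2] at hp'
      exact Bool.noConfusion hp'.2.2
  -- names
  set a : ℕ := (univ.filter (fun p => (H p = c ∧ pred p = c) ∧ J p = false)).card with ha
  set a2 : ℕ := (univ.filter (fun p => (H p = c ∧ pred p = c) ∧ J p = true)).card with ha2
  set f : ℕ := (univ.filter (fun p => (H p ≠ c ∧ pred p = c) ∧ J p = false)).card with hf
  set fi : ℕ := (univ.filter (fun p => (H p ≠ c ∧ pred p = c) ∧ J p = true)).card with hfi
  set n : ℕ := (univ.filter (fun p => (H p = c ∧ pred p ≠ c) ∧ J p = false)).card with hn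
  set ni : ℕ := (univ.filter (fun p => (H p = c ∧ pred p ≠ c) ∧ J p = true)).card with hni
  have hTP0 : (TP₀ c H pred).card = a + a2 := by
    rw [TP₀]; exact split _
  have hFP0 : (FP₀ c H pred).card = f + fi := by
    rw [FP₀]; exact split _
  have hFN0 : (FN₀ c H pred).card = n + ni := by
    rw [FN₀]; exact split _
  have hTI : (TI c H J conf θ).card = a2 + ni := by
    rw [hTIsplit, card_union_of_disjoint]
    rw [Finset.disjoint_left]
    intro p hp hp'
    simp only [mem_filter] at hp hp'
    exact hp'.2.1.2 hp.2.1.2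
  have hni : 1 ≤ ni := by
    obtain ⟨p, hp, hJp⟩ := hex
    rw [FN₀, mem_filter] at hp
    apply Finset.card_pos.mpr
    exact ⟨p, by simp only [mem_filter, mem_univ, true_and]; exact ⟨hp.2, hJp⟩⟩
  rw [IoU, UIoU, hTP, hFP, hFN, hFI, hTI, hTP0, hFP0, hFN0]
  simp only [card_empty]
  push_cast
  have hA : (0:ℝ) ≤ a := Nat.cast_nonneg a
  have hA2 : (0:ℝ) ≤ a2 := Nat.cast_nonneg a2
  have hF : (0:ℝ) ≤ f := Nat.cast_nonneg f
  have hFi : (0:ℝ) ≤ fi := Nat.cast_nonneg fi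
  have hN : (0:ℝ) ≤ n := Nat.cast_nonneg n
  have hNi : (1:ℝ) ≤ ni := by exact_mod_cast hni
  rw [div_lt_div_iff₀ (by linarith) (by linarith)]
  nlinarith [mul_nonneg hA hFi, mul_nonneg hA (le_trans zero_le_one hNi), sq_nonneg ((ni:ℝ))]
end

section
/- Suppose there exist real thresholds θ1 < θ2 such that conf(p) ≤ θ1 for every pixel p with J(p) = true, and conf(p) ≥ θ2 for every pixel p with J(p) = false, and suppose there exists a pixel p ∈ FN₀ ∪ FP₀ with J(p) = true. Then for every θ with θ1 < θ ≤ θ2, the strict inequality |FN(θ)| + |FP(θ)| < |FN₀| + |FP₀| holds. -/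
open Finset

/-- Under confidence separation between invalid and valid pixels, if some misclassified pixel
(false negative or false positive with no invalidation) is invalid, then for every θ with
θ1 < θ ≤ θ2 the number of false negatives and false positives strictly decreases. -/
theorem card_fn_fp_lt
    {P : Type*} [Fintype P] [DecidableEq P] {C : ℕ} (c : Fin C)
    (H : P → Fin C) (J : P → Bool) (pred : P → Fin C) (conf : P → ℝ)
    (θ1 θ2 : ℝ) (h12 : θ1 < θ2)
    (hinv : ∀ p, J p = true → conf p ≤ θ1)
    (hval : ∀ p, J p = false → θ2 ≤ conf p)
    (hex : ∃ p ∈ FN₀ c H pred ∪ FP₀ c H pred, J p = true) :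
    ∀ θ : ℝ, θ1 < θ → θ ≤ θ2 →
      (FN c H pred conf θ).card + (FP c H pred conf θ).card <
        (FN₀ c H pred).card + (FP₀ c H pred).card := by
  intro θ hθ1 hθ2
  obtain ⟨p, hp, hJp⟩ := hex
  have hconf : conf p < θ := lt_of_le_of_lt (hinv p hJp) hθ1
  have hFN : FN c H pred conf θ ⊆ FN₀ c H pred := by
    intro q hq
    simp only [FN, FN₀, mem_filter, mem_univ, true_and] at hq ⊢
    exact ⟨hq.1, hq.2.2⟩
  have hFP : FP c H pred conf θ ⊆ FP₀ c H pred := by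
    intro q hq
    simp only [FP, FP₀, mem_filter, mem_univ, true_and] at hq ⊢
    exact ⟨hq.1, hq.2.2⟩
  simp only [mem_union] at hp
  rcases hp with hp | hp
  · have : FN c H pred conf θ ⊂ FN₀ c H pred := by
      refine ⟨hFN, fun hsub => ?_⟩
      have := hsub hp
      simp only [FN, mem_filter] at this
      exact absurd this.2.2.1 (not_le.mpr hconf)
    exact Nat.add_lt_add_of_lt_of_le (card_lt_card this) (card_le_card hFP)
  · have : FP c H pred conf θ ⊂ FP₀ c H pred := by
      refine ⟨hFP, fun hsub => ?_⟩
      have := hsub hp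
      simp only [FP, mem_filter] at this
      exact absurd this.2.2.1 (not_le.mpr hconf)
    exact Nat.add_lt_add_of_le_of_lt (card_le_card hFN) (card_lt_card this)
end

section
/- Suppose conf(p) ≥ θ2 for every pixel p with J(p) = false, and let θ ≤ θ2 be a threshold such that |FN(θ)| < |FN₀|. Then |TP₀| < |TP(θ)| + |TI(θ)|. -/
open Finset

/-- If valid pixels have confidence at least θ2, and θ ≤ θ2 is a threshold at which the number
of false negatives strictly decreased, then |TP₀| < |TP(θ)| + |TI(θ)|. -/
theorem card_tp0_lt_tp_add_ti
    {P : Type*} [Fintype P] {C : ℕ} (c : Fin C)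
    (H : P → Fin C) (J : P → Bool) (pred : P → Fin C) (conf : P → ℝ)
    (θ2 : ℝ) (hval : ∀ p, J p = false → θ2 ≤ conf p)
    (θ : ℝ) (hθ : θ ≤ θ2)
    (hfn : (FN c H pred conf θ).card < (FN₀ c H pred).card) :
    (TP₀ c H pred).card < (TP c H pred conf θ).card + (TI c H J conf θ).card := by
  classical
  set A := univ.filter (fun p => H p = c ∧ conf p < θ ∧ pred p = c) with hA
  set B := univ.filter (fun p => H p = c ∧ conf p < θ ∧ pred p ≠ c) with hB
  have hsub : A ∪ B ⊆ TI c H J conf θ := by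
    intro p hp
    simp only [hA, hB, TI, mem_union, mem_filter, mem_univ, true_and] at hp ⊢
    have hconf : H p = c ∧ conf p < θ := by tauto
    refine ⟨hconf.1, hconf.2, ?_⟩
    cases hJ : J p with
    | true => rfl
    | false => exact absurd (le_trans hθ (hval p hJ)) (not_le.mpr hconf.2)
  have hAB : Disjoint A B := by
    simp only [hA, hB, disjoint_left, mem_filter, mem_univ, true_and]
    tauto
  have hTPdisj : Disjoint (TP c H pred conf θ) A := by
    simp only [hA, TP, disjoint_left, mem_filter, mem_univ, true_and]
    intro p hp hq
    exact absurd hp.2.1 (not_le.mpr hq.2.1)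
  have hFNdisj : Disjoint (FN c H pred conf θ) B := by
    simp only [hB, FN, disjoint_left, mem_filter, mem_univ, true_and]
    intro p hp hq
    exact absurd hp.2.1 (not_le.mpr hq.2.1)
  have h1 : (TP₀ c H pred).card = (TP c H pred conf θ).card + A.card := by
    rw [← card_union_of_disjoint hTPdisj]
    congr 1
    ext p
    simp only [TP₀, TP, hA, mem_union, mem_filter, mem_univ, true_and]
    rcases le_or_gt θ (conf p) with h | h
    · constructor
      · rintro ⟨h1, h2⟩; exact Or.inl ⟨h1, h, h2⟩
      · rintro (⟨h1, _, h2⟩ | ⟨h1, _, h2⟩) <;> exact ⟨h1, h2⟩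
    · constructor
      · rintro ⟨h1, h2⟩; exact Or.inr ⟨h1, h, h2⟩
      · rintro (⟨h1, h2, h3⟩ | ⟨h1, _, h3⟩)
        · exact absurd h2 (not_le.mpr h)
        · exact ⟨h1, h3⟩
  have h2 : (FN₀ c H pred).card = (FN c H pred conf θ).card + B.card := by
    rw [← card_union_of_disjoint hFNdisj]
    congr 1
    ext p
    simp only [FN₀, FN, hB, mem_union, mem_filter, mem_univ, true_and]
    rcases le_or_gt θ (conf p) with h | h
    · constructor
      · rintro ⟨h1, h2⟩; exact Or.inl ⟨h1, h, h2⟩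
      · rintro (⟨h1, _, h2⟩ | ⟨h1, _, h2⟩) <;> exact ⟨h1, h2⟩
    · constructor
      · rintro ⟨h1, h2⟩; exact Or.inr ⟨h1, h, h2⟩
      · rintro (⟨h1, h2, h3⟩ | ⟨h1, _, h3⟩)
        · exact absurd h2 (not_le.mpr h)
        · exact ⟨h1, h3⟩
  have h3 : A.card + B.card ≤ (TI c H J conf θ).card := by
    rw [← card_union_of_disjoint hAB]
    exact card_le_card hsub
  omega
end

section
/- Let tp₀, fn₀, fp₀, tp, ti, fn, fi, fp be natural numbers satisfying tp₀ + fn₀ = tp + fn + ti + fi, fp ≤ fp₀, and tp₀ < tp + ti. Then, as real numbers, tp₀ / (tp₀ + fn₀ + fp₀) < (tp + ti) / (tp + ti + fp + fn + fi). -/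
/-- Arithmetic core of the first case of Theorem 1: if tp₀ + fn₀ = tp + fn + ti + fi,
fp ≤ fp₀, and tp₀ < tp + ti, then IoU = tp₀/(tp₀+fn₀+fp₀) < (tp+ti)/(tp+ti+fp+fn+fi) = UIoU. -/
theorem iou_lt_uiou_arith_case1 (tp₀ fn₀ fp₀ tp ti fn fi fp : ℕ)
    (hsum : tp₀ + fn₀ = tp + fn + ti + fi) (hfp : fp ≤ fp₀) (htp : tp₀ < tp + ti) :
    (tp₀ : ℝ) / (tp₀ + fn₀ + fp₀) < ((tp : ℝ) + ti) / (tp + ti + fp + fn + fi) := by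
  have hsum' : (tp₀ : ℝ) + fn₀ = tp + fn + ti + fi := by exact_mod_cast hsum
  have hfp' : (fp : ℝ) ≤ fp₀ := by exact_mod_cast hfp
  have htp' : (tp₀ : ℝ) < tp + ti := by exact_mod_cast htp
  have h0 : (0:ℝ) ≤ tp₀ := Nat.cast_nonneg _
  have h1 : (0:ℝ) ≤ fn := Nat.cast_nonneg _
  have h2 : (0:ℝ) ≤ fi := Nat.cast_nonneg _
  have h3 : (0:ℝ) ≤ fp := Nat.cast_nonneg _
  have hd2 : (0:ℝ) < tp + ti + fp + fn + fi := by linarith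
  have hd1 : (0:ℝ) < tp₀ + fn₀ + fp₀ := by linarith
  rw [div_lt_div_iff₀ hd1 hd2]
  nlinarith [mul_nonneg h0 (sub_nonneg.2 hfp')]
end
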